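/- arXiv:2509.02551 — 2 statements merged into one kernel-verified Lean document; each statement's English description precedes it below -/
import Mathlib

section
/- Let d ≥ 1, M ≥ 1, ε ∈ [0,1), μ > 0, G ≥ 0. Let g ∈ ℝ^d with |g_j| ≤ G for all j, let α_1, …, α_M ≥ 0 with ∑_m α_m = 1, and for each modality m and coordinate j let ω'_{j}{}^{(m)} ≥ 0, Δ_j^{(m)} ∈ ℝ, and ω_j^{(m)} = ε·ω'_j{}^{(m)} + (1−ε)·(Δ_j^{(m)})². Then |∑_{j=1}^d g_j · ∑_{m=1}^M α_m · (Δ_j^{(m)}/(√(ω_j^{(m)}) + μ) − Δ_j^{(m)}/(√(ε·ω'_j{}^{(m)}) + μ))| ≤ √(1−ε)·G·∑_{j=1}^d ∑_{m=1}^M α_m · (Δ_j^{(m)})² / ((√(ω_j^{(m)}) + μ)·(√(ε·ω'_j{}^{(m)}) + μ)). -/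
/-!
Coordinatewise, `δ/a - δ/b = δ (b - a)/(a b)`, and the two denominators differ by at most
`√(1-ε)|δ|`, because the moving average adds `(1-ε)δ²` under the square root and `√` is
subadditive. Hence each term of `A - B` is at most `√(1-ε) δ²/(a b)` in absolute value,
and summing against the gating weights and the gradient coordinates (bounded by `G`) gives
the claim.
-/

open Finset Real

theorem abs_sqrt_add_sub_sqrt_le (x : ℝ) {y : ℝ} (hy : 0 ≤ y) : |√(x + y) - √x| ≤ √y := by
  rw [abs_sub_le_iff]
  refine ⟨?_, by linarith [sqrt_le_sqrt (show x ≤ x + y by linarith), sqrt_nonneg y]⟩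
  rcases le_total 0 x with hx | hx
  · rw [sub_le_iff_le_add, sqrt_le_iff]
    refine ⟨by positivity, ?_⟩
    nlinarith [sq_sqrt hx, sq_sqrt hy, mul_nonneg (sqrt_nonneg x) (sqrt_nonneg y)]
  · rw [sqrt_eq_zero'.2 hx, sub_zero]
    exact sqrt_le_sqrt (by linarith)

theorem abs_sqrt_ema_sub_sqrt_le (w δ : ℝ) {ε : ℝ} (hε : ε ≤ 1) :
    |√(ε * w + (1 - ε) * δ ^ 2) - √(ε * w)| ≤ √(1 - ε) * |δ| := by
  have h := abs_sqrt_add_sub_sqrt_le (ε * w) (mul_nonneg (sub_nonneg.2 hε) (sq_nonneg δ))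
  rwa [sqrt_mul (sub_nonneg.2 hε), sqrt_sq_eq_abs] at h

theorem abs_div_sub_div_le_of_abs_sub_le {a b c x : ℝ} (ha : 0 < a) (hb : 0 < b)
    (h : |a - b| ≤ c * |x|) : |x / a - x / b| ≤ c * (x ^ 2 / (a * b)) := by
  have hdiff : x / a - x / b = x * (b - a) / (a * b) := by
    field_simp
  calc |x / a - x / b| = |x| * |a - b| / (a * b) := by
        rw [hdiff, abs_div, abs_mul, abs_sub_comm, abs_of_pos (mul_pos ha hb)]
    _ ≤ |x| * (c * |x|) / (a * b) := by gcongr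
    _ = c * (x ^ 2 / (a * b)) := by rw [← sq_abs x]; ring

theorem abs_sum_mul_sum_mul_le {ι κ : Type*} [Fintype ι] [Fintype κ] {g : ι → ℝ} {G : ℝ}
    {α : κ → ℝ} {u v : κ → ι → ℝ} (hg : ∀ j, |g j| ≤ G) (hα : ∀ m, 0 ≤ α m)
    (huv : ∀ m j, |u m j| ≤ v m j) :
    |∑ j, g j * ∑ m, α m * u m j| ≤ G * ∑ j, ∑ m, α m * v m j := by
  have hinner (j : ι) : |∑ m, α m * u m j| ≤ ∑ m, α m * v m j :=
    (abs_sum_le_sum_abs _ _).trans <| sum_le_sum fun m _ => by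
      rw [abs_mul, abs_of_nonneg (hα m)]
      exact mul_le_mul_of_nonneg_left (huv m j) (hα m)
  calc |∑ j, g j * ∑ m, α m * u m j| ≤ ∑ j, |g j * ∑ m, α m * u m j| := abs_sum_le_sum_abs _ _
    _ ≤ ∑ j, G * ∑ m, α m * v m j := sum_le_sum fun j _ => by
        rw [abs_mul]
        exact mul_le_mul (hg j) (hinner j) (abs_nonneg _) ((abs_nonneg _).trans (hg j))
    _ = G * ∑ j, ∑ m, α m * v m j := (mul_sum _ _ _).symm

theorem utt_inner_product_A_minus_B_bound_general
    (d M : ℕ) (ε μ G : ℝ)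
    (hε1 : ε < 1) (hμ : 0 < μ)
    (g : Fin d → ℝ) (hg : ∀ j, |g j| ≤ G)
    (α : Fin M → ℝ) (hα : ∀ m, 0 ≤ α m)
    (ω' Δ ω : Fin M → Fin d → ℝ)
    (hω : ∀ m j, ω m j = ε * ω' m j + (1 - ε) * (Δ m j) ^ 2) :
    |∑ j, g j * ∑ m, α m *
        (Δ m j / (Real.sqrt (ω m j) + μ) -
          Δ m j / (Real.sqrt (ε * ω' m j) + μ))| ≤
      Real.sqrt (1 - ε) * G *
        ∑ j, ∑ m, α m * ((Δ m j) ^ 2 /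
          ((Real.sqrt (ω m j) + μ) * (Real.sqrt (ε * ω' m j) + μ))) := by
  have hcoord (m : Fin M) (j : Fin d) :
      |Δ m j / (√(ω m j) + μ) - Δ m j / (√(ε * ω' m j) + μ)| ≤
        √(1 - ε) * (Δ m j ^ 2 / ((√(ω m j) + μ) * (√(ε * ω' m j) + μ))) := by
    refine abs_div_sub_div_le_of_abs_sub_le (by positivity) (by positivity) ?_
    rw [add_sub_add_right_eq_sub, hω]
    exact abs_sqrt_ema_sub_sqrt_le _ _ hε1.le
  calc _ ≤ G * ∑ j, ∑ m, α m *
        (√(1 - ε) * (Δ m j ^ 2 / ((√(ω m j) + μ) * (√(ε * ω' m j) + μ)))) :=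
        abs_sum_mul_sum_mul_le hg hα hcoord
    _ = _ := by
        simp_rw [mul_left_comm (α _), ← mul_sum]
        ring

/-- UTT descent analysis: bound on the inner-product term `⟨∇f(θ_t), A − B⟩`
between the gradient and the difference of the gated fusion updates with the
current and the ε-scaled previous second-moment estimates. -/
theorem utt_inner_product_A_minus_B_bound
    (d M : ℕ) (hd : 1 ≤ d) (hM : 1 ≤ M) (ε μ G : ℝ)
    (hε0 : 0 ≤ ε) (hε1 : ε < 1) (hμ : 0 < μ) (hG : 0 ≤ G)
    (g : Fin d → ℝ) (hg : ∀ j, |g j| ≤ G)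
    (α : Fin M → ℝ) (hα : ∀ m, 0 ≤ α m) (hαsum : ∑ m, α m = 1)
    (ω' Δ ω : Fin M → Fin d → ℝ)
    (hω' : ∀ m j, 0 ≤ ω' m j)
    (hω : ∀ m j, ω m j = ε * ω' m j + (1 - ε) * (Δ m j) ^ 2) :
    |∑ j, g j * ∑ m, α m *
        (Δ m j / (Real.sqrt (ω m j) + μ) -
          Δ m j / (Real.sqrt (ε * ω' m j) + μ))| ≤
      Real.sqrt (1 - ε) * G *
        ∑ j, ∑ m, α m * ((Δ m j) ^ 2 /
          ((Real.sqrt (ω m j) + μ) * (Real.sqrt (ε * ω' m j) + μ))) :=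
  utt_inner_product_A_minus_B_bound_general d M ε μ G hε1 hμ g hg α hα ω' Δ ω hω
end

section
/- Let d ≥ 1, N ≥ 1, let f : ℝ^d → ℝ be differentiable and bounded below by f*, let x_0, x_1, …, x_N ∈ ℝ^d, and let constants η > 0, η_l > 0, β ≥ 1, ε ∈ [0,1], μ > 0, G ≥ 0, E ≥ 0 be given with K = η_l·β·G. Suppose for each round t < N there is ω_t ∈ ℝ^d with 0 ≤ ω_{t,j} ≤ K² for all j, and the per-round descent inequality f(x_{t+1}) ≤ f(x_t) − (η·η_l·β/8)·∑_{j=1}^d [∇f(x_t)]_j² / (√(ε·ω_{t,j}) + μ) + E holds. Then min_{0 ≤ t ≤ N−1} ‖∇f(x_t)‖² ≤ (8·(√ε·η_l·β·G + μ) / (η·η_l·β·N)) · (f(x_0) − f* + N·E). -/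
/-!
Telescoping the descent inequality bounds `(η ηl β / 8) ∑_{t<N} C_t` by `f x₀ - f* + N E`.
Since `√(ε ω_{t,j}) ≤ √ε K`, every weight `√(ε ω_{t,j}) + μ` is at most `√ε K + μ`, so
`C_t ≥ ‖∇f(x_t)‖² / (√ε K + μ)`, and each of the `N` terms dominates the minimum.
-/

open Real Finset

theorem mul_sum_le_of_descent (F C : ℕ → ℝ) (c E : ℝ) (N : ℕ)
    (h : ∀ t < N, F (t + 1) ≤ F t - c * C t + E) :
    c * ∑ t ∈ range N, C t ≤ F 0 - F N + N * E := by
  have hstep : ∑ t ∈ range N, c * C t ≤ ∑ t ∈ range N, (F t - F (t + 1) + E) :=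
    sum_le_sum fun t ht => by linarith [h t (mem_range.mp ht)]
  rwa [← mul_sum, sum_add_distrib, sum_range_sub', sum_const, card_range, nsmul_eq_mul] at hstep

theorem norm_sq_div_le_sum_sq_div {ι : Type*} [Fintype ι] (v : EuclideanSpace ℝ ι)
    (w : ι → ℝ) (D : ℝ) (hw : ∀ j, 0 < w j) (hwD : ∀ j, w j ≤ D) :
    ‖v‖ ^ 2 / D ≤ ∑ j, v j ^ 2 / w j := by
  rw [EuclideanSpace.norm_sq_eq, sum_div]
  exact sum_le_sum fun j _ => by
    rw [Real.norm_eq_abs, sq_abs]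
    exact div_le_div_of_nonneg_left (sq_nonneg _) (hw j) (hwD j)

theorem sqrt_mul_le_sqrt_mul_of_le_sq {ε ω K : ℝ} (hε : 0 ≤ ε) (hK : 0 ≤ K) (hω : ω ≤ K ^ 2) :
    √(ε * ω) ≤ √ε * K := by
  rw [sqrt_mul hε]
  exact mul_le_mul_of_nonneg_left ((sqrt_le_left hK).mpr hω) (sqrt_nonneg ε)

/-- UTT convergence assembly: telescoping the per-round descent inequality with
negative drift `−(η·η_l·β/8)·C_t` and per-round error `E` yields the stated
bound on the minimum squared gradient norm. -/
theorem utt_convergence_assembly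
    (d N : ℕ) (hN : 1 ≤ N)
    (f : EuclideanSpace ℝ (Fin d) → ℝ)
    (fstar : ℝ) (hbdd : ∀ y, fstar ≤ f y)
    (x : ℕ → EuclideanSpace ℝ (Fin d))
    (η ηl : ℝ) (β : ℕ) (ε μ G E : ℝ)
    (hη : 0 < η) (hηl : 0 < ηl) (hβ : 1 ≤ β)
    (hε0 : 0 ≤ ε) (hμ : 0 < μ) (hG : 0 ≤ G)
    (K : ℝ) (hK : K = ηl * (β : ℝ) * G)
    (ω : ℕ → Fin d → ℝ)
    (hω : ∀ t < N, ∀ j, 0 ≤ ω t j ∧ ω t j ≤ K ^ 2)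
    (hdescent : ∀ t < N,
      f (x (t + 1)) ≤ f (x t) -
        (η * ηl * (β : ℝ) / 8) *
          ∑ j, (gradient f (x t) j) ^ 2 / (Real.sqrt (ε * ω t j) + μ) + E) :
    (Finset.range N).inf' (Finset.nonempty_range_iff.mpr (by omega))
        (fun t => ‖gradient f (x t)‖ ^ 2) ≤
      (8 * (Real.sqrt ε * ηl * (β : ℝ) * G + μ) / (η * ηl * (β : ℝ) * N)) *
        (f (x 0) - fstar + (N : ℝ) * E) := by
  set C : ℕ → ℝ := fun t => ∑ j, (gradient f (x t) j) ^ 2 / (√(ε * ω t j) + μ)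
  set m := (range N).inf' (nonempty_range_iff.mpr (by omega)) fun t => ‖gradient f (x t)‖ ^ 2
  set D := √ε * ηl * β * G + μ
  have hβ0 : (0 : ℝ) < β := by exact_mod_cast hβ
  have hN0 : (0 : ℝ) < N := by exact_mod_cast hN
  have hD : 0 < D := by positivity
  have hdrift : η * ηl * β / 8 * ∑ t ∈ range N, C t ≤ f (x 0) - fstar + N * E := by
    linarith [mul_sum_le_of_descent (fun t => f (x t)) C _ E N hdescent, hbdd (x N)]
  have hK0 : 0 ≤ K := by rw [hK]; positivity
  have hround : ∀ t ∈ range N, m / D ≤ C t := fun t ht => by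
    have hwD : ∀ j, √(ε * ω t j) + μ ≤ D := fun j => by
      have := sqrt_mul_le_sqrt_mul_of_le_sq hε0 hK0 (hω t (mem_range.mp ht) j).2
      linarith [show √ε * K = √ε * ηl * β * G by rw [hK]; ring]
    calc m / D ≤ ‖gradient f (x t)‖ ^ 2 / D := by gcongr; exact inf'_le _ ht
      _ ≤ C t := norm_sq_div_le_sum_sq_div _ _ _ (fun j => by positivity) hwD
  have hsum := card_nsmul_le_sum _ _ _ hround
  rw [card_range, nsmul_eq_mul] at hsum
  calc m = η * ηl * β / 8 * (N * (m / D)) * (8 * D / (η * ηl * β * N)) := by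
        field_simp
    _ ≤ (f (x 0) - fstar + N * E) * (8 * D / (η * ηl * β * N)) := by
        gcongr
        exact (mul_le_mul_of_nonneg_left hsum (by positivity)).trans hdrift
    _ = _ := mul_comm _ _
end
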